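/- arXiv:0802.4434 — 3 statements merged into one kernel-verified Lean document; each statement's English description precedes it below -/
import Mathlib

section
/- The function ψ(s,t) = 2y(s,t)s + [ln ρ - st](z(s,t) - 1) + ln ρ, where y(s,t) = (1/s²)[μ(e^{st}-st-1) + λ(1-st-e^{-st})] and z(s,t) = (1/s)[μ(e^{st}-1) + λ(e^{-st}-1)] + 1 and ρ = λ/μ, satisfies the characteristic equation ∂ψ/∂t = p(z-1) + q(λe^{-q} - μe^{q}) with p = s and q = ln ρ - st, and ψ(s,0) = ln ρ. -/
/-! Along the ray, `y' = z - 1` and `z' = μ e^{st} - λ e^{-st}`, so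
`ψ' = 2s(z - 1) - s(z - 1) + q z' = p(z - 1) + q z'`. Since `e^q = ρ e^{-st}` with `ρ = λ/μ`,
one has `λ e^{-q} = μ e^{st}` and `μ e^{q} = λ e^{-st}`, so `z' = λ e^{-q} - μ e^{q}`. -/

open Real

namespace RayExpansion

noncomputable def rayY (lam mu s t : ℝ) : ℝ :=
  1 / s ^ 2 * (mu * (exp (s * t) - s * t - 1) + lam * (1 - s * t - exp (-(s * t))))

noncomputable def rayZ (lam mu s t : ℝ) : ℝ :=
  1 / s * (mu * (exp (s * t) - 1) + lam * (exp (-(s * t)) - 1)) + 1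

variable (lam mu : ℝ) {s : ℝ}

lemma hasDerivAt_exp_mul (s t : ℝ) :
    HasDerivAt (fun u ↦ exp (s * u)) (exp (s * t) * s) t := by
  simpa using ((hasDerivAt_id t).const_mul s).exp

lemma hasDerivAt_exp_neg_mul (s t : ℝ) :
    HasDerivAt (fun u ↦ exp (-(s * u))) (exp (-(s * t)) * -s) t := by
  simpa using ((hasDerivAt_id t).const_mul s).neg.exp

lemma hasDerivAt_rayY (hs : s ≠ 0) (t : ℝ) :
    HasDerivAt (rayY lam mu s) (rayZ lam mu s t - 1) t := by
  have hst : HasDerivAt (fun u ↦ s * u) s t := by simpa using (hasDerivAt_id t).const_mul s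
  have h := ((((hasDerivAt_exp_mul s t).sub hst).sub_const 1).const_mul mu |>.add
    ((((hasDerivAt_const t 1).sub hst).sub (hasDerivAt_exp_neg_mul s t)).const_mul lam)).const_mul
    (1 / s ^ 2)
  refine h.congr_deriv ?_
  rw [rayZ]
  field_simp
  ring

lemma hasDerivAt_rayZ (hs : s ≠ 0) (t : ℝ) :
    HasDerivAt (rayZ lam mu s) (mu * exp (s * t) - lam * exp (-(s * t))) t := by
  have h := ((((hasDerivAt_exp_mul s t).sub_const 1).const_mul mu).add
    (((hasDerivAt_exp_neg_mul s t).sub_const 1).const_mul lam)).const_mul (1 / s) |>.add_const 1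
  refine h.congr_deriv ?_
  field_simp
  ring

variable {lam mu}

lemma mul_exp_log_div_sub (hlam : 0 < lam) (hmu : 0 < mu) (x : ℝ) :
    mu * exp (log (lam / mu) - x) = lam * exp (-x) := by
  rw [exp_sub, exp_log (div_pos hlam hmu), exp_neg]
  field_simp

lemma mul_exp_neg_log_div_sub (hlam : 0 < lam) (hmu : 0 < mu) (x : ℝ) :
    lam * exp (-(log (lam / mu) - x)) = mu * exp x := by
  rw [neg_sub, exp_sub, exp_log (div_pos hlam hmu)]
  field_simp

end RayExpansion

open RayExpansion in
theorem psi_characteristic_equation (lam mu s : ℝ)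
    (hlam : 0 < lam) (hmu : lam < mu) (hs : s ≠ 0)
    (ρ : ℝ) (hρ : ρ = lam / mu)
    (y z ψ p q : ℝ → ℝ)
    (hy : ∀ t, y t = (1 / s ^ 2) * (mu * (Real.exp (s * t) - s * t - 1)
        + lam * (1 - s * t - Real.exp (-(s * t)))))
    (hz : ∀ t, z t = (1 / s) * (mu * (Real.exp (s * t) - 1) + lam * (Real.exp (-(s * t)) - 1)) + 1)
    (hψ : ∀ t, ψ t = 2 * y t * s + (Real.log ρ - s * t) * (z t - 1) + Real.log ρ)
    (hp : ∀ t, p t = s)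
    (hq : ∀ t, q t = Real.log ρ - s * t) :
    (∀ t, HasDerivAt ψ (p t * (z t - 1)
        + q t * (lam * Real.exp (-(q t)) - mu * Real.exp (q t))) t) ∧
    ψ 0 = Real.log ρ := by
  have hmu₀ : 0 < mu := hlam.trans hmu
  obtain rfl : y = rayY lam mu s := funext hy
  obtain rfl : z = rayZ lam mu s := funext hz
  obtain rfl : ψ = fun t ↦ 2 * rayY lam mu s t * s + (log ρ - s * t) * (rayZ lam mu s t - 1)
      + log ρ := funext hψ
  refine ⟨fun t ↦ ?_, by simp [rayY, rayZ]⟩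
  have hq' : HasDerivAt (fun u ↦ log ρ - s * u) (0 - s * 1) t :=
    (hasDerivAt_const t _).sub ((hasDerivAt_id t).const_mul s)
  have hψ' := ((((hasDerivAt_rayY lam mu hs t).const_mul 2).mul_const s).add
    (hq'.mul ((hasDerivAt_rayZ lam mu hs t).sub_const 1))).add_const (log ρ)
  refine hψ'.congr_deriv ?_
  rw [hp, hq, hρ, mul_exp_neg_log_div_sub hlam hmu₀, mul_exp_log_div_sub hlam hmu₀]
  ring
end

section
/- For the rays y(s,t), z(s,t) defined by y = (1/s²)[μ(e^{st}-st-1) + λ(1-st-e^{-st})], z = (1/s)[μ(e^{st}-1) + λ(e^{-st}-1)] + 1, the Jacobian J(s,t) = y_t z_s - y_s z_t equals (1/s)[2 z_t y - (z-1)²], where z_t = μe^{st} - λe^{-st}. -/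
/-!
Both rays are rescalings of one profile and its derivative: with
`E x = μ(eˣ - x - 1) + λ(1 - x - e⁻ˣ)` we have `y = E(st)/s²` and `z = E'(st)/s + 1`, and
`E'' x = μeˣ - λe⁻ˣ`. The four partial derivatives then follow from the chain rule, and in
`y_t z_s - y_s z_t` the terms containing `t` cancel, leaving `(2 E'' E - E'²)/s³`.
-/

open Real

section ScaledProfiles

variable {E F : ℝ → ℝ} {y z : ℝ → ℝ → ℝ} {e g s t : ℝ}

lemma hasDerivAt_scaled_snd (hy : ∀ s t, y s t = 1 / s ^ 2 * E (s * t))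
    (hE : HasDerivAt E e (s * t)) (hs : s ≠ 0) :
    HasDerivAt (fun τ => y s τ) (1 / s * e) t := by
  simp only [hy]
  exact ((hE.comp t (hasDerivAt_const_mul s)).const_mul (1 / s ^ 2)).congr_deriv
    (by field_simp)

lemma hasDerivAt_scaled_fst (hy : ∀ s t, y s t = 1 / s ^ 2 * E (s * t))
    (hE : HasDerivAt E e (s * t)) (hs : s ≠ 0) :
    HasDerivAt (fun σ => y σ t) (t / s ^ 2 * e - 2 / s ^ 3 * E (s * t)) s := by
  simp only [hy, one_div]
  exact (((hasDerivAt_pow 2 s).inv (pow_ne_zero 2 hs)).mul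
    (hE.comp s (hasDerivAt_mul_const t))).congr_deriv
    (by simp only [Function.comp_apply, Pi.inv_apply]; field_simp; ring)

lemma hasDerivAt_scaledDeriv_snd (hz : ∀ s t, z s t = 1 / s * F (s * t) + 1)
    (hF : HasDerivAt F g (s * t)) (hs : s ≠ 0) :
    HasDerivAt (fun τ => z s τ) g t := by
  simp only [hz]
  exact (((hF.comp t (hasDerivAt_const_mul s)).const_mul (1 / s)).add_const 1).congr_deriv
    (by field_simp)

lemma hasDerivAt_scaledDeriv_fst (hz : ∀ s t, z s t = 1 / s * F (s * t) + 1)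
    (hF : HasDerivAt F g (s * t)) (hs : s ≠ 0) :
    HasDerivAt (fun σ => z σ t) (t / s * g - 1 / s ^ 2 * F (s * t)) s := by
  simp only [hz, one_div]
  exact (((hasDerivAt_inv hs).mul (hF.comp s (hasDerivAt_mul_const t))).add_const 1).congr_deriv
    (by simp only [Function.comp_apply]; field_simp; ring)

theorem jacobian_scaled_eq (hy : ∀ s t, y s t = 1 / s ^ 2 * E (s * t))
    (hz : ∀ s t, z s t = 1 / s * F (s * t) + 1)
    (hE : HasDerivAt E (F (s * t)) (s * t)) (hF : HasDerivAt F g (s * t)) (hs : s ≠ 0) :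
    deriv (fun τ => y s τ) t * deriv (fun σ => z σ t) s
      - deriv (fun σ => y σ t) s * deriv (fun τ => z s τ) t
    = 1 / s * (2 * g * y s t - (z s t - 1) ^ 2) := by
  rw [(hasDerivAt_scaled_snd hy hE hs).deriv, (hasDerivAt_scaled_fst hy hE hs).deriv,
    (hasDerivAt_scaledDeriv_snd hz hF hs).deriv, (hasDerivAt_scaledDeriv_fst hz hF hs).deriv,
    hy, hz]
  field_simp
  ring

end ScaledProfiles

lemma hasDerivAt_rayProfile (lam mu x : ℝ) :
    HasDerivAt (fun x => mu * (exp x - x - 1) + lam * (1 - x - exp (-x)))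
      (mu * (exp x - 1) + lam * (exp (-x) - 1)) x :=
  ((((hasDerivAt_exp x).sub (hasDerivAt_id x)).sub_const 1).const_mul mu).add
    ((((hasDerivAt_id x).const_sub 1).sub (hasDerivAt_neg x).exp).const_mul lam)
    |>.congr_deriv (by ring)

lemma hasDerivAt_rayProfileDeriv (lam mu x : ℝ) :
    HasDerivAt (fun x => mu * (exp x - 1) + lam * (exp (-x) - 1))
      (mu * exp x - lam * exp (-x)) x :=
  ((((hasDerivAt_exp x).sub_const 1).const_mul mu).add
    ((((hasDerivAt_neg x).exp).sub_const 1).const_mul lam)).congr_deriv (by ring)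

theorem jacobian_formula_general (lam mu : ℝ)
    (y z : ℝ → ℝ → ℝ)
    (hy : ∀ s t, y s t = (1 / s ^ 2) * (mu * (Real.exp (s * t) - s * t - 1)
        + lam * (1 - s * t - Real.exp (-(s * t)))))
    (hz : ∀ s t, z s t = (1 / s) * (mu * (Real.exp (s * t) - 1)
        + lam * (Real.exp (-(s * t)) - 1)) + 1)
    (s t : ℝ) (hs : s ≠ 0) :
    deriv (fun τ => y s τ) t * deriv (fun σ => z σ t) s
      - deriv (fun σ => y σ t) s * deriv (fun τ => z s τ) t
    = (1 / s) * (2 * (mu * Real.exp (s * t) - lam * Real.exp (-(s * t))) * y s t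
        - (z s t - 1) ^ 2) ∧
    deriv (fun τ => z s τ) t = mu * Real.exp (s * t) - lam * Real.exp (-(s * t)) :=
  ⟨jacobian_scaled_eq hy hz (hasDerivAt_rayProfile lam mu _)
      (hasDerivAt_rayProfileDeriv lam mu _) hs,
    (hasDerivAt_scaledDeriv_snd hz (hasDerivAt_rayProfileDeriv lam mu _) hs).deriv⟩

theorem jacobian_formula (lam mu : ℝ) (hlam : 0 < lam) (hmu : 0 < mu)
    (y z : ℝ → ℝ → ℝ)
    (hy : ∀ s t, y s t = (1 / s ^ 2) * (mu * (Real.exp (s * t) - s * t - 1)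
        + lam * (1 - s * t - Real.exp (-(s * t)))))
    (hz : ∀ s t, z s t = (1 / s) * (mu * (Real.exp (s * t) - 1)
        + lam * (Real.exp (-(s * t)) - 1)) + 1)
    (s t : ℝ) (hs : s ≠ 0) (ht : 0 < t) :
    deriv (fun τ => y s τ) t * deriv (fun σ => z σ t) s
      - deriv (fun σ => y σ t) s * deriv (fun τ => z s τ) t
    = (1 / s) * (2 * (mu * Real.exp (s * t) - lam * Real.exp (-(s * t))) * y s t
        - (z s t - 1) ^ 2) ∧
    deriv (fun τ => z s τ) t = mu * Real.exp (s * t) - lam * Real.exp (-(s * t)) :=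
  jacobian_formula_general lam mu y z hy hz s t hs
end

section
/- For A, B, C > 0 with Δ = √(B²-4AC) > 0 and r = (B-Δ)/(2A), the function Φ_l(x) = e^{θx}(C/A)^{l/2} J_{l-α+B/θ}(β/θ) with β = 2√(AC) satisfies the differential-difference equation (l-α)Φ_l'(x) = AΦ_{l+1}(x) + CΦ_{l-1}(x) - BΦ_l(x) for every x ∈ ℝ, every integer l, every nonzero θ, and every α ∈ (0,1). -/
/-!
The Bessel recurrence `x J_{ν+1}(x) + x J_{ν-1}(x) = 2ν J_ν(x)` is checked coefficientwise on
the defining power series, using only `Γ(s + 1) = s Γ(s)`. Each `Φ_l` is `e^{θx}` times a constant,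
so `Φ_l' = θ Φ_l`; since `A (C/A)^{(l+1)/2} = C (C/A)^{(l-1)/2} = (β/2) (C/A)^{l/2}`, the
difference-differential equation becomes the recurrence at order `ν = l - α + B/θ` and
argument `β/θ`.
-/

/-- Bessel function of the first kind of real order `ν`, via its power series
(using `Real.rpow` for the factor `(x/2)^ν`). -/
noncomputable def besselJ (ν x : ℝ) : ℝ :=
  ∑' m : ℕ, ((-1 : ℝ) ^ m / ((m.factorial : ℝ) * Real.Gamma (ν + m + 1)))
    * (x / 2) ^ (2 * (m : ℝ) + ν)

open Real

noncomputable def besselCoeff (ν : ℝ) (m : ℕ) : ℝ :=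
  (-1 : ℝ) ^ m / ((m.factorial : ℝ) * Gamma (ν + m + 1))

lemma besselJ_eq_tsum (ν x : ℝ) :
    besselJ ν x = ∑' m : ℕ, besselCoeff ν m * (x / 2) ^ (2 * (m : ℝ) + ν) := rfl

/-- Unlike `Real.Gamma_add_one`, this holds at the poles `s ∈ -ℕ` too, where `Gamma s = 0`. -/
lemma Real.inv_Gamma_eq_self_mul_inv_Gamma_add_one (s : ℝ) :
    (Gamma s)⁻¹ = s * (Gamma (s + 1))⁻¹ := by
  rcases ne_or_eq s 0 with hs | rfl
  · rw [Gamma_add_one hs, mul_inv, mul_inv_cancel_left₀ hs]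
  · rw [zero_add, Gamma_zero, inv_zero, zero_mul]

lemma mul_besselCoeff_zero (ν : ℝ) : ν * besselCoeff ν 0 = besselCoeff (ν - 1) 0 := by
  simp only [besselCoeff, pow_zero, Nat.factorial_zero, Nat.cast_one, Nat.cast_zero, one_mul,
    add_zero, sub_add_cancel, one_div, ← inv_Gamma_eq_self_mul_inv_Gamma_add_one]

lemma mul_besselCoeff_succ_sub (ν : ℝ) (m : ℕ) :
    ν * besselCoeff ν (m + 1) - besselCoeff (ν - 1) (m + 1) = besselCoeff (ν + 1) m := by
  have hΓ := inv_Gamma_eq_self_mul_inv_Gamma_add_one (ν + m + 1)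
  simp only [besselCoeff, div_eq_mul_inv, mul_inv, Nat.factorial_succ, Nat.cast_mul, Nat.cast_succ,
    pow_succ]
  rw [show ν - 1 + ((m : ℝ) + 1) + 1 = ν + m + 1 by ring, hΓ,
    show ν + ((m : ℝ) + 1) + 1 = ν + m + 1 + 1 by ring,
    show ν + 1 + (m : ℝ) + 1 = ν + m + 1 + 1 by ring]
  field_simp
  ring

lemma one_le_Gamma_of_two_le {s : ℝ} (hs : 2 ≤ s) : 1 ≤ Gamma s :=
  Gamma_two ▸ Gamma_strictMonoOn_Ici.monotoneOn Set.self_mem_Ici hs hs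

/-- Once `ν + m + 1 ≥ 2` the Gamma factor is at least `1`, so the series is dominated by
`|z|^ν e^{|z|²}`. -/
lemma summable_besselJ_series (ν x : ℝ) :
    Summable fun m : ℕ => besselCoeff ν m * (x / 2) ^ (2 * (m : ℝ) + ν) := by
  set z := |x / 2|
  refine ((summable_pow_div_factorial (z ^ 2)).mul_left (z ^ ν)).of_norm_bounded_eventually_nat ?_
  filter_upwards [Filter.eventually_ge_atTop ⌈1 - ν⌉₊] with m hm
  have hνm : 1 ≤ ν + m := by linarith [(Nat.ceil_le.mp hm)]
  have hΓ : 1 ≤ Gamma (ν + m + 1) := one_le_Gamma_of_two_le (by linarith)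
  have hfac : (0 : ℝ) < m.factorial := by positivity
  have hcoeff : |besselCoeff ν m| ≤ (m.factorial : ℝ)⁻¹ := by
    rw [besselCoeff, abs_div, abs_pow, abs_neg, abs_one, one_pow, abs_of_pos (by positivity),
      one_div]
    exact inv_anti₀ hfac (le_mul_of_one_le_right hfac.le hΓ)
  have hpow : z ^ (2 * (m : ℝ) + ν) = z ^ ν * (z ^ 2) ^ m := by
    rw [add_comm, rpow_add' (abs_nonneg _) (by linarith),
      show 2 * (m : ℝ) = ((2 * m : ℕ) : ℝ) by push_cast; ring, rpow_natCast, pow_mul]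
  calc ‖besselCoeff ν m * (x / 2) ^ (2 * (m : ℝ) + ν)‖
      ≤ (m.factorial : ℝ)⁻¹ * z ^ (2 * (m : ℝ) + ν) := by
        rw [norm_mul, Real.norm_eq_abs, Real.norm_eq_abs]
        exact mul_le_mul hcoeff (abs_rpow_le_abs_rpow _ _) (abs_nonneg _) (by positivity)
    _ = z ^ ν * ((z ^ 2) ^ m / m.factorial) := by rw [hpow]; ring

theorem besselJ_recurrence (ν x : ℝ) (hx : x ≠ 0) :
    x * besselJ (ν + 1) x + x * besselJ (ν - 1) x = 2 * ν * besselJ ν x := by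
  set z := x / 2
  have hz : z ≠ 0 := div_ne_zero hx two_ne_zero
  have hxz : x = 2 * z := by ring
  -- the `m`-th term of `2ν J_ν(x) - x J_{ν-1}(x)` is `0` for `m = 0` and the `(m-1)`-st term
  -- of `x J_{ν+1}(x)` otherwise
  set g : ℕ → ℝ := fun m => 2 * ν * (besselCoeff ν m * z ^ (2 * (m : ℝ) + ν))
      - x * (besselCoeff (ν - 1) m * z ^ (2 * (m : ℝ) + (ν - 1)))
  have hg_zero : g 0 = 0 := by
    have e : 2 * ((0 : ℕ) : ℝ) + ν = 2 * ((0 : ℕ) : ℝ) + (ν - 1) + 1 := by ring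
    simp only [g, hxz, e, rpow_add_one hz]
    linear_combination (2 * z * z ^ (2 * ((0 : ℕ) : ℝ) + (ν - 1))) * mul_besselCoeff_zero ν
  have hg_succ (m : ℕ) : g (m + 1) = x * (besselCoeff (ν + 1) m * z ^ (2 * (m : ℝ) + (ν + 1))) := by
    have e₁ : 2 * ((m + 1 : ℕ) : ℝ) + ν = 2 * (m : ℝ) + (ν + 1) + 1 := by push_cast; ring
    have e₂ : 2 * ((m + 1 : ℕ) : ℝ) + (ν - 1) = 2 * (m : ℝ) + (ν + 1) := by push_cast; ring
    simp only [g, hxz, e₁, e₂, rpow_add_one hz]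
    linear_combination (2 * z * z ^ (2 * (m : ℝ) + (ν + 1))) * mul_besselCoeff_succ_sub ν m
  have hS := fun ν' => summable_besselJ_series ν' x
  have hg : Summable g := ((hS ν).mul_left _).sub ((hS (ν - 1)).mul_left _)
  have hsum : 2 * ν * besselJ ν x - x * besselJ (ν - 1) x = ∑' m, g m := by
    rw [besselJ_eq_tsum, besselJ_eq_tsum, ← tsum_mul_left, ← tsum_mul_left]
    exact (((hS ν).mul_left _).tsum_sub ((hS (ν - 1)).mul_left _)).symm
  have hshift : ∑' m, g m = x * besselJ (ν + 1) x := by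
    rw [hg.tsum_eq_zero_add, hg_zero, zero_add]
    simp only [hg_succ, tsum_mul_left, besselJ_eq_tsum]
    rfl
  linarith

lemma mul_rpow_add_one_half {A C : ℝ} (hA : 0 < A) (hC : 0 < C) (t : ℝ) :
    A * (C / A) ^ ((t + 1) / 2) = √(A * C) * (C / A) ^ (t / 2) := by
  have hs : √(A * C) = A * √(C / A) := by
    rw [sqrt_eq_iff_mul_self_eq (by positivity) (by positivity),
      mul_mul_mul_comm, mul_self_sqrt (by positivity)]
    field_simp
  rw [add_div, rpow_add (by positivity), ← sqrt_eq_rpow, hs]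
  ring

lemma mul_rpow_sub_one_half {A C : ℝ} (hA : 0 < A) (hC : 0 < C) (t : ℝ) :
    C * (C / A) ^ ((t - 1) / 2) = √(A * C) * (C / A) ^ (t / 2) := by
  have hs : C = √(A * C) * √(C / A) := by
    rw [← sqrt_mul (by positivity), eq_comm, sqrt_eq_iff_mul_self_eq (by positivity) hC.le]
    field_simp
  rw [show t / 2 = (t - 1) / 2 + 1 / 2 by ring, rpow_add (by positivity), ← sqrt_eq_rpow]
  linear_combination (C / A) ^ ((t - 1) / 2) * hs

theorem separable_solution_satisfies_dde_general (A B C α θ : ℝ)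
    (hA : 0 < A) (hC : 0 < C)
    (hθ : θ ≠ 0)
    (β : ℝ) (hβ : β = 2 * Real.sqrt (A * C))
    (Φ : ℤ → ℝ → ℝ)
    (hΦ : ∀ (l : ℤ) (x : ℝ), Φ l x
        = Real.exp (θ * x) * (C / A) ^ ((l : ℝ) / 2) * besselJ ((l : ℝ) - α + B / θ) (β / θ)) :
    ∀ (l : ℤ) (x : ℝ),
      ((l : ℝ) - α) * deriv (Φ l) x = A * Φ (l + 1) x + C * Φ (l - 1) x - B * Φ l x := by
  intro l x
  have hderiv : deriv (Φ l) x = θ * Φ l x := by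
    rw [funext (hΦ l), ((((hasDerivAt_id' x).const_mul θ).exp.mul_const _).mul_const _).deriv]
    ring
  have hν_succ : ((l + 1 : ℤ) : ℝ) - α + B / θ = (l - α + B / θ) + 1 := by push_cast; ring
  have hν_pred : ((l - 1 : ℤ) : ℝ) - α + B / θ = (l - α + B / θ) - 1 := by push_cast; ring
  rw [hderiv, hΦ, hΦ, hΦ, hν_succ, hν_pred]
  set ν := (l : ℝ) - α + B / θ
  have hrec := besselJ_recurrence ν (β / θ) (div_ne_zero (by rw [hβ]; positivity) hθ)
  have hβθ : θ * (β / θ) = 2 * √(A * C) := by rw [mul_div_cancel₀ β hθ, hβ]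
  have hBθ : θ * (B / θ) = B := mul_div_cancel₀ B hθ
  push_cast
  linear_combination (-exp (θ * x) * besselJ (ν + 1) (β / θ)) * mul_rpow_add_one_half hA hC l
    - (exp (θ * x) * besselJ (ν - 1) (β / θ)) * mul_rpow_sub_one_half hA hC l
    - (θ / 2 * exp (θ * x) * (C / A) ^ ((l : ℝ) / 2)) * hrec
    + (exp (θ * x) * (C / A) ^ ((l : ℝ) / 2) * (besselJ (ν + 1) (β / θ) + besselJ (ν - 1) (β / θ))
      / 2) * hβθ
    - (exp (θ * x) * (C / A) ^ ((l : ℝ) / 2) * besselJ ν (β / θ)) * hBθ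

theorem separable_solution_satisfies_dde (A B C α θ : ℝ)
    (hA : 0 < A) (hB : 0 < B) (hC : 0 < C)
    (hΔ : 0 < Real.sqrt (B ^ 2 - 4 * A * C)) (hθ : θ ≠ 0) (hα0 : 0 < α) (hα1 : α < 1)
    (β : ℝ) (hβ : β = 2 * Real.sqrt (A * C))
    (Φ : ℤ → ℝ → ℝ)
    (hΦ : ∀ (l : ℤ) (x : ℝ), Φ l x
        = Real.exp (θ * x) * (C / A) ^ ((l : ℝ) / 2) * besselJ ((l : ℝ) - α + B / θ) (β / θ)) :
    ∀ (l : ℤ) (x : ℝ),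
      ((l : ℝ) - α) * deriv (Φ l) x = A * Φ (l + 1) x + C * Φ (l - 1) x - B * Φ l x :=
  separable_solution_satisfies_dde_general A B C α θ hA hC hθ β hβ Φ hΦ
end
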